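/- Let $c > 1$ and $\epsilon > 0$. Then there exists $\delta > 0$ such that, with probability tending to $1$ as $n \to \infty$, the Erdős–Rényi random graph $G \in \mathcal{G}(n, c/n)$ satisfies $\nu(G, \mathcal{C}_{\lfloor \delta n \rfloor}) \le \nu(G, \mathcal{C}_{\lfloor 1/\delta \rfloor}) + \epsilon$. -/

import Mathlib

open SimpleGraph Filter

/-- The probability, in the Erdős–Rényi model `𝒢(n, p)` (each of the `n.choose 2` possible
edges present independently with probability `p`), that the random graph lies in the set
`A` of graphs on `{1, …, n}`. -/
noncomputable def erProb (n : ℕ) (p : ℝ) (A : Set (SimpleGraph (Fin n))) : ℝ :=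
  ∑ G : SimpleGraph (Fin n),
    A.indicator (fun G => p ^ G.edgeSet.ncard * (1 - p) ^ (n.choose 2 - G.edgeSet.ncard)) G

/-- `N(G, 𝒞_k)`: the largest size of a vertex set `S` such that every connected component
of the induced subgraph `G[S]` has at most `k` vertices. -/
noncomputable def NC {V : Type*} [Fintype V] (G : SimpleGraph V) (k : ℕ) : ℕ :=
  sSup {m | ∃ S : Set V, m = S.ncard ∧
    ∀ v : S, (((G.induce S).connectedComponentMk v).supp).ncard ≤ k}


/-!
With high probability every vertex set `A` of `G ∈ 𝒢(n, c/n)` with `K < |A| ≤ δn` spans at most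
`|A| + |A|/K` edges: this is a first-moment bound over `A` and over sets of `|A| + ⌊|A|/K⌋ + 1`
pairs inside `A`, which is summable once `δ` is small compared with `(e²c)^{-K}`.

For such a graph let `S` realise `N(G, 𝒞_{⌊δn⌋})`. A component `C` of `G[S]` with more than `K`
vertices has a spanning tree and at most `|C|/K + 1` further edges; deleting one endpoint of each
of these leaves a forest, and a forest on `m` vertices is cut into pieces of at most `K` vertices
by deleting `m/(K+1)` of them (remove the deepest vertex whose subtree has more than `K` vertices,
discard that subtree and recurse). Altogether at most `3|S|/K` deletions turn `S` into a set
inducing `𝒞_K`, so `K ≥ 3/ε` and `δ ≤ 1/K` give the claim.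
-/

open Finset Real
open scoped Classical

section PowersetSums

theorem Finset.sum_superset_pow_mul_one_sub_pow {ι R : Type*} [CommRing R] [DecidableEq ι]
    {D F : Finset ι} (hF : F ⊆ D) (p : R) :
    ∑ T ∈ D.powerset with F ⊆ T, p ^ #T * (1 - p) ^ (#D - #T) = p ^ #F := by
  have key := Finset.prod_add (fun _ => p) (fun e => if e ∈ F then 0 else 1 - p) D
  rw [prod_congr rfl (g := fun e => if e ∈ F then p else 1) (fun e _ => by split_ifs <;> ring),
    prod_ite_mem, inter_eq_right.2 hF, prod_const] at key
  rw [key, sum_filter]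
  refine sum_congr rfl fun T hT => ?_
  rw [prod_const]
  split_ifs with hFT
  · rw [prod_congr rfl fun e he => if_neg fun heF => (mem_sdiff.1 he).2 (hFT heF),
      prod_const, card_sdiff_of_subset (mem_powerset.1 hT)]
  · obtain ⟨e, heF, heT⟩ := not_subset.1 hFT
    rw [Finset.prod_eq_zero (mem_sdiff.2 ⟨hF heF, heT⟩) (by simp [heF]), mul_zero]

theorem Set.indicator_biUnion_le_sum {α ι M : Type*} [AddCommMonoid M] [PartialOrder M]
    [IsOrderedAddMonoid M] (I : Finset ι) (B : ι → Set α) {f : α → M} (hf : 0 ≤ f) (a : α) :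
    (⋃ i ∈ I, B i).indicator f a ≤ ∑ i ∈ I, (B i).indicator f a := by
  by_cases ha : a ∈ ⋃ i ∈ I, B i
  · obtain ⟨i, hi, hai⟩ := Set.mem_iUnion₂.1 ha
    rw [Set.indicator_of_mem ha, ← Set.indicator_of_mem hai f]
    exact single_le_sum (f := fun i => (B i).indicator f a)
      (fun j _ => Set.indicator_nonneg (fun a _ => hf a) a) hi
  · rw [Set.indicator_of_notMem ha]
    exact sum_nonneg fun j _ => Set.indicator_nonneg (fun a _ => hf a) a

variable {V : Type*} [Fintype V] [DecidableEq V]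

theorem SimpleGraph.sum_edgeFinset {M : Type*} [AddCommMonoid M] (f : Finset (Sym2 V) → M) :
    ∑ G : SimpleGraph V, f G.edgeFinset = ∑ T ∈ (⊤ : SimpleGraph V).edgeFinset.powerset, f T := by
  rw [← sum_image fun G _ H _ h => edgeFinset_inj.1 h]
  congr 1
  ext T
  simp only [mem_image, mem_univ, true_and, mem_powerset]
  refine ⟨fun ⟨G, hG⟩ => hG ▸ edgeFinset_mono le_top, fun hT => ⟨fromEdgeSet T, ?_⟩⟩
  ext e
  simp only [mem_edgeFinset, edgeSet_fromEdgeSet, Set.mem_sdiff, mem_coe]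
  exact ⟨fun h => h.1, fun h => ⟨h, not_isDiag_of_mem_edgeFinset (hT h)⟩⟩

end PowersetSums

section ErdosRenyi

variable {n : ℕ} {p : ℝ}

theorem SimpleGraph.ncard_edgeSet {V : Type*} [Fintype V] (G : SimpleGraph V) [DecidableRel G.Adj] :
    G.edgeSet.ncard = #G.edgeFinset := by
  rw [← coe_edgeFinset, Set.ncard_coe_finset]

theorem erProb_superset_eq {F : Finset (Sym2 (Fin n))}
    (hF : F ⊆ (⊤ : SimpleGraph (Fin n)).edgeFinset) :
    erProb n p {G | F ⊆ G.edgeFinset} = p ^ #F := by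
  have hD : n.choose 2 = #(⊤ : SimpleGraph (Fin n)).edgeFinset := by
    rw [card_edgeFinset_top_eq_card_choose_two, Fintype.card_fin]
  simp only [erProb, Set.indicator_apply, Set.mem_ofPred_eq, SimpleGraph.ncard_edgeSet, hD]
  rw [SimpleGraph.sum_edgeFinset (fun T => if F ⊆ T then p ^ #T * (1 - p) ^
    (#(⊤ : SimpleGraph (Fin n)).edgeFinset - #T) else 0), ← sum_filter,
    sum_superset_pow_mul_one_sub_pow hF]

theorem erProb_univ : erProb n p Set.univ = 1 := by
  simpa using erProb_superset_eq (n := n) (p := p) (empty_subset _)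

theorem erProb_compl (A : Set (SimpleGraph (Fin n))) : erProb n p Aᶜ = 1 - erProb n p A := by
  rw [← erProb_univ (n := n) (p := p), eq_sub_iff_add_eq, erProb, erProb, erProb,
    ← sum_add_distrib]
  simp

theorem erProb_superset_le (hp₀ : 0 ≤ p) (F : Finset (Sym2 (Fin n))) :
    erProb n p {G | F ⊆ G.edgeFinset} ≤ p ^ #F := by
  by_cases hF : F ⊆ (⊤ : SimpleGraph (Fin n)).edgeFinset
  · exact (erProb_superset_eq hF).le
  · have : {G : SimpleGraph (Fin n) | F ⊆ G.edgeFinset} = ∅ :=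
      Set.eq_empty_of_forall_notMem fun G hG => hF (hG.trans (edgeFinset_mono le_top))
    simp [this, erProb, pow_nonneg hp₀]

variable (hp₀ : 0 ≤ p) (hp₁ : p ≤ 1)
include hp₀ hp₁

theorem pow_mul_one_sub_pow_nonneg (a b : ℕ) : 0 ≤ p ^ a * (1 - p) ^ b :=
  mul_nonneg (pow_nonneg hp₀ _) (pow_nonneg (sub_nonneg.2 hp₁) _)

theorem erProb_mono {A B : Set (SimpleGraph (Fin n))} (h : A ⊆ B) :
    erProb n p A ≤ erProb n p B :=
  sum_le_sum fun G _ =>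
    Set.indicator_le_indicator_of_subset h (fun _ => pow_mul_one_sub_pow_nonneg hp₀ hp₁ _ _) G

theorem erProb_le_one (A : Set (SimpleGraph (Fin n))) : erProb n p A ≤ 1 :=
  erProb_univ (n := n) (p := p) ▸ erProb_mono hp₀ hp₁ (Set.subset_univ A)

theorem erProb_biUnion_le {ι : Type*} (I : Finset ι) (B : ι → Set (SimpleGraph (Fin n))) :
    erProb n p (⋃ i ∈ I, B i) ≤ ∑ i ∈ I, erProb n p (B i) := by
  unfold erProb
  rw [sum_comm]
  exact sum_le_sum fun G _ =>
    Set.indicator_biUnion_le_sum I B (fun _ => pow_mul_one_sub_pow_nonneg hp₀ hp₁ _ _) G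

theorem erProb_card_inter_ge_le (P : Finset (Sym2 (Fin n))) (t : ℕ) :
    erProb n p {G | t ≤ #(G.edgeFinset ∩ P)} ≤ (#P).choose t * p ^ t := by
  calc erProb n p {G | t ≤ #(G.edgeFinset ∩ P)}
      ≤ erProb n p (⋃ F ∈ P.powersetCard t, {G | F ⊆ G.edgeFinset}) := by
        refine erProb_mono hp₀ hp₁ fun G hG => ?_
        obtain ⟨F, hF, hFt⟩ := exists_subset_card_eq hG
        exact Set.mem_iUnion₂.2 ⟨F, mem_powersetCard.2 ⟨hF.trans inter_subset_right, hFt⟩,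
          hF.trans inter_subset_left⟩
    _ ≤ ∑ F ∈ P.powersetCard t, p ^ #F :=
        (erProb_biUnion_le hp₀ hp₁ _ _).trans (sum_le_sum fun F _ => erProb_superset_le hp₀ F)
    _ = (#P).choose t * p ^ t := by
        rw [sum_congr rfl fun F hF => by rw [(mem_powersetCard.1 hF).2], sum_const,
          card_powersetCard, nsmul_eq_mul]

end ErdosRenyi

section Asymptotics

open Nat in
theorem Nat.choose_le_exp_mul_div_pow (n k : ℕ) : (n.choose k : ℝ) ≤ (exp 1 * n / k) ^ k := by
  rcases k.eq_zero_or_pos with rfl | hk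
  · simp
  have hk' : (0 : ℝ) < k := by exact_mod_cast hk
  calc (n.choose k : ℝ) ≤ n ^ k / k ! := Nat.choose_le_pow_div k n
    _ = (n / k) ^ k * (k ^ k / k !) := by rw [div_pow]; field_simp
    _ ≤ (n / k) ^ k * exp k := by gcongr; exact pow_div_factorial_le_exp _ hk'.le k
    _ = (exp 1 * n / k) ^ k := by rw [← exp_one_pow]; ring

theorem choose_mul_choose_sq_mul_pow_le {n s t : ℕ} {c : ℝ} (hc : 0 ≤ c) (hn : 0 < n)
    (hs : 0 < s) (hst : s ≤ t) :
    n.choose s * (s ^ 2).choose t * (c / n) ^ t ≤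
      (exp 2 * c) ^ s * (exp 1 * c * s / n) ^ (t - s) := by
  have hs' : (0 : ℝ) < s := by exact_mod_cast hs
  have hn' : (0 : ℝ) < n := by exact_mod_cast hn
  have hst' : (s : ℝ) ≤ t := by exact_mod_cast hst
  have hs₀ : (s : ℝ) ≠ 0 := hs'.ne'
  have hn₀ : (n : ℝ) ≠ 0 := hn'.ne'
  have hsq : ((s ^ 2).choose t : ℝ) ≤ (exp 1 * s) ^ t :=
    calc ((s ^ 2).choose t : ℝ) ≤ (exp 1 * (s ^ 2 : ℕ) / t) ^ t := Nat.choose_le_exp_mul_div_pow _ _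
      _ ≤ (exp 1 * s) ^ t := by
        gcongr
        rw [div_le_iff₀ (by linarith)]
        push_cast
        rw [sq, mul_assoc]
        gcongr
  obtain ⟨u, rfl⟩ := Nat.exists_eq_add_of_le hst
  calc n.choose s * (s ^ 2).choose (s + u) * (c / n) ^ (s + u)
      ≤ (exp 1 * n / s) ^ s * (exp 1 * s) ^ (s + u) * (c / n) ^ (s + u) := by
        gcongr
        exact Nat.choose_le_exp_mul_div_pow n s
    _ = (exp 1 * n / s * (exp 1 * s) * (c / n)) ^ s * (exp 1 * s * (c / n)) ^ u := by
        rw [mul_pow, mul_pow (exp 1 * n / s * _), pow_add, pow_add]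
        ring
    _ = (exp 2 * c) ^ s * (exp 1 * c * s / n) ^ (s + u - s) := by
        rw [Nat.add_sub_cancel_left, show exp 2 = exp 1 * exp 1 by rw [← exp_add]; norm_num]
        congr 2
        · field_simp
        · ring

theorem choose_mul_choose_sq_mul_pow_le_geometric {n s K : ℕ} {c δ r : ℝ} (hc : 1 ≤ c)
    (hK : 0 < K) (hn : 0 < n) (hs : 0 < s) (hsδ : (s : ℝ) ≤ δ * n)
    (hδ : (exp 2 * c) ^ K * (exp 1 * c) * δ ≤ 1 / 2) (hr₀ : 0 ≤ r) (hr₁ : r ≤ 1)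
    (hrK : r ^ K = 1 / 2) :
    n.choose s * (s ^ 2).choose (s + s / K + 1) * (c / n) ^ (s + s / K + 1) ≤
      2 * (exp 2 * c) ^ K * (exp 1 * c) / n * (s * r ^ s) := by
  have hn' : (0 : ℝ) < n := by exact_mod_cast hn
  have hsq : s ≤ K * (s / K + 1) := (Nat.lt_mul_div_succ s hK).le
  set q := s / K
  clear_value q
  set y := exp 1 * c * s / n
  have ha : 1 ≤ exp 2 * c := one_le_mul_of_one_le_of_one_le (one_le_exp (by norm_num)) hc
  have hx₀ : 0 ≤ (exp 2 * c) ^ K * y := by positivity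
  have hx : (exp 2 * c) ^ K * y ≤ 1 / 2 := by
    refine le_trans ?_ ((mul_assoc _ _ δ).symm.trans_le hδ)
    gcongr
    rw [div_le_iff₀ hn', mul_assoc (exp 1 * c)]
    gcongr
  have hhalf : (1 / 2 : ℝ) ^ q ≤ 2 * r ^ s := by
    have : (1 / 2 : ℝ) ^ (q + 1) ≤ r ^ s := by
      rw [← hrK, ← pow_mul]
      exact pow_le_pow_of_le_one hr₀ hr₁ hsq
    rw [pow_succ] at this
    linarith
  calc n.choose s * (s ^ 2).choose (s + q + 1) * (c / n) ^ (s + q + 1)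
      ≤ (exp 2 * c) ^ s * y ^ (q + 1) := by
        simpa [show s + q + 1 - s = q + 1 by omega] using
          choose_mul_choose_sq_mul_pow_le (t := s + q + 1) (zero_le_one.trans hc) hn hs (by omega)
    _ ≤ (exp 2 * c) ^ (K * (q + 1)) * y ^ (q + 1) := by gcongr
    _ = ((exp 2 * c) ^ K * y) ^ q * ((exp 2 * c) ^ K * y) := by rw [pow_mul, ← mul_pow, pow_succ]
    _ ≤ (1 / 2) ^ q * ((exp 2 * c) ^ K * y) := by gcongr
    _ ≤ 2 * r ^ s * ((exp 2 * c) ^ K * y) := by gcongr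
    _ = 2 * (exp 2 * c) ^ K * (exp 1 * c) / n * (s * r ^ s) := by ring

theorem tendsto_sum_choose_mul_choose_sq_mul_pow {c δ : ℝ} {K : ℕ} (hc : 1 ≤ c) (hK : 0 < K)
    (hδ : (exp 2 * c) ^ K * (exp 1 * c) * δ ≤ 1 / 2) :
    Tendsto (fun n : ℕ => ∑ s ∈ Icc (K + 1) ⌊δ * n⌋₊,
      n.choose s * (s ^ 2).choose (s + s / K + 1) * (c / n) ^ (s + s / K + 1)) atTop (nhds 0) := by
  set r : ℝ := (1 / 2) ^ (K⁻¹ : ℝ)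
  have hr₀ : 0 < r := by positivity
  have hr₁ : r < 1 := rpow_lt_one (by norm_num) (by norm_num) (by positivity)
  have hrK : r ^ K = 1 / 2 := rpow_inv_natCast_pow (by norm_num) hK.ne'
  have hsum : Summable fun s : ℕ => (s : ℝ) * r ^ s :=
    (hasSum_coe_mul_geometric_of_norm_lt_one (by rwa [norm_of_nonneg hr₀.le])).summable
  set B := 2 * (exp 2 * c) ^ K * (exp 1 * c)
  refine squeeze_zero' (Eventually.of_forall fun n => sum_nonneg fun s _ => by positivity)
    ?_ (tendsto_const_div_atTop_nhds_zero_nat (B * ∑' s : ℕ, (s : ℝ) * r ^ s))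
  filter_upwards [eventually_gt_atTop 0] with n hn
  calc _ ≤ ∑ s ∈ Icc (K + 1) ⌊δ * n⌋₊, B / n * (s * r ^ s) := by
        refine sum_le_sum fun s hs => ?_
        have hs := mem_Icc.1 hs
        have hδ₀ : 0 ≤ δ := by
          by_contra! h
          simp [Nat.floor_of_nonpos (mul_nonpos_of_nonpos_of_nonneg h.le (Nat.cast_nonneg n))] at hs
          omega
        exact choose_mul_choose_sq_mul_pow_le_geometric hc hK hn (by omega)
          ((Nat.cast_le.2 hs.2).trans (Nat.floor_le (by positivity))) hδ hr₀.le hr₁.le hrK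
    _ ≤ B / n * ∑' s : ℕ, (s : ℝ) * r ^ s := by
        rw [← mul_sum]
        gcongr
        exact hsum.sum_le_tsum _ fun s _ => by positivity
    _ = B * (∑' s : ℕ, (s : ℝ) * r ^ s) / n := by ring

end Asymptotics

namespace SimpleGraph

variable {V : Type*} {G : SimpleGraph V}

section Restrict

/-- `G[s]` as a spanning subgraph of `G`: unlike `G.induce s` it keeps the vertex type `V`,
the vertices outside `s` becoming isolated. -/
def restrict (G : SimpleGraph V) (s : Set V) : SimpleGraph V where
  Adj u v := G.Adj u v ∧ u ∈ s ∧ v ∈ s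
  symm := ⟨fun _ _ h => ⟨h.1.symm, h.2.2, h.2.1⟩⟩
  loopless := ⟨fun _ h => h.1.ne rfl⟩

variable {s t : Set V} {u v : V}

@[simp]
theorem restrict_adj : (G.restrict s).Adj u v ↔ G.Adj u v ∧ u ∈ s ∧ v ∈ s := Iff.rfl

theorem restrict_mono (h : s ⊆ t) : G.restrict s ≤ G.restrict t :=
  fun _ _ huv => ⟨huv.1, h huv.2.1, h huv.2.2⟩

theorem Reachable.mem_of_forall_adj {X : Set V} (hX : ∀ x ∈ X, ∀ y, G.Adj x y → y ∈ X)
    (h : G.Reachable u v) (hu : u ∈ X) : v ∈ X := by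
  rw [reachable_iff_reflTransGen] at h
  induction h with
  | refl => exact hu
  | tail _ hbc ih => exact hX _ ih _ hbc

theorem Reachable.restrict_of_forall (hst : ∀ w, (G.restrict s).Reachable u w → w ∈ t)
    (h : (G.restrict s).Reachable u v) : (G.restrict t).Reachable u v := by
  rw [reachable_iff_reflTransGen] at h ⊢
  induction h with
  | refl => rfl
  | @tail b c hab hbc ih =>
    have hub : (G.restrict s).Reachable u b := (reachable_iff_reflTransGen _ _).2 hab
    exact ih.tail ⟨hbc.1, hst b hub, hst c (hub.trans hbc.reachable)⟩

theorem reachable_induce_iff {a b : s} :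
    (G.induce s).Reachable a b ↔ (G.restrict s).Reachable a b := by
  refine ⟨fun h => h.map
    (⟨Subtype.val, fun {x y} hxy => ⟨hxy, x.2, y.2⟩⟩ : G.induce s →g G.restrict s), fun h => ?_⟩
  suffices ∀ y, (G.restrict s).Reachable a y → ∀ hy : y ∈ s, (G.induce s).Reachable a ⟨y, hy⟩
    from this b h b.2
  intro y hy
  rw [reachable_iff_reflTransGen] at hy
  induction hy with
  | refl => exact fun _ => Reachable.rfl
  | tail _ hbc ih => exact fun hy => (ih hbc.2.1).trans (Adj.reachable (induce_adj.2 hbc.1))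

end Restrict

section Component

variable [Fintype V] {S T : Finset V} {u v w : V}

/-- The vertex set of the component of `G[S]` containing `v`; it is `{v}` when `v ∉ S`. -/
noncomputable def componentIn (G : SimpleGraph V) (S : Finset V) (v : V) : Finset V :=
  {u | (G.restrict S).Reachable v u}

@[simp]
theorem mem_componentIn : u ∈ G.componentIn S v ↔ (G.restrict S).Reachable v u := by
  simp [componentIn]

theorem self_mem_componentIn : v ∈ G.componentIn S v :=
  mem_componentIn.2 Reachable.rfl

theorem componentIn_subset_of_forall_adj {X : Set V}
    (hX : ∀ x ∈ X, ∀ y, (G.restrict S).Adj x y → y ∈ X) (hv : v ∈ X) :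
    ↑(G.componentIn S v) ⊆ X :=
  fun _ hu => (mem_componentIn.1 hu).mem_of_forall_adj hX hv

theorem componentIn_subset (hv : v ∈ S) : G.componentIn S v ⊆ S :=
  coe_subset.1 <| componentIn_subset_of_forall_adj (fun _ _ _ hxy => hxy.2.2) hv

theorem componentIn_mono (h : S ⊆ T) : G.componentIn S v ⊆ G.componentIn T v :=
  fun _ hu => mem_componentIn.2 <| (mem_componentIn.1 hu).mono (restrict_mono (coe_subset.2 h))

theorem componentIn_eq_of_mem (h : u ∈ G.componentIn S v) :
    G.componentIn S u = G.componentIn S v := by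
  ext w
  simp only [mem_componentIn] at h ⊢
  exact ⟨h.trans, h.symm.trans⟩

theorem componentIn_subset_componentIn (h : G.componentIn S v ⊆ T) :
    G.componentIn S v ⊆ G.componentIn T v :=
  fun _ hu => mem_componentIn.2 <|
    (mem_componentIn.1 hu).restrict_of_forall fun _ hw => h (mem_componentIn.2 hw)

theorem ncard_supp_induce (hv : v ∈ S) :
    ((G.induce (S : Set V)).connectedComponentMk ⟨v, hv⟩).supp.ncard = #(G.componentIn S v) := by
  rw [← Set.ncard_image_of_injective _ Subtype.val_injective, ← Set.ncard_coe_finset]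
  congr 1
  ext u
  simp only [Set.mem_image, ConnectedComponent.mem_supp_iff, ConnectedComponent.eq, mem_coe,
    mem_componentIn, reachable_induce_iff]
  refine ⟨fun ⟨a, ha, hau⟩ => hau ▸ ha.symm, fun h => ?_⟩
  exact ⟨⟨u, coe_subset.2 (componentIn_subset hv) (mem_componentIn.2 h)⟩, h.symm, rfl⟩

end Component

end SimpleGraph

section NC

variable {V : Type*} [Fintype V] {G : SimpleGraph V} {S : Finset V} {k k' : ℕ}

theorem bddAbove_NC_set (G : SimpleGraph V) (k : ℕ) :
    BddAbove {m | ∃ S : Set V, m = S.ncard ∧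
      ∀ v : S, (((G.induce S).connectedComponentMk v).supp).ncard ≤ k} :=
  ⟨Nat.card V, by rintro m ⟨S, rfl, -⟩; exact Set.ncard_le_card S⟩

theorem le_NC (hS : ∀ v ∈ S, #(G.componentIn S v) ≤ k) : #S ≤ NC G k :=
  le_csSup (bddAbove_NC_set G k) ⟨S, (Set.ncard_coe_finset S).symm,
    fun ⟨v, hv⟩ => (SimpleGraph.ncard_supp_induce hv).trans_le (hS v hv)⟩

theorem exists_card_eq_NC (G : SimpleGraph V) (k : ℕ) :
    ∃ S : Finset V, #S = NC G k ∧ ∀ v ∈ S, #(G.componentIn S v) ≤ k := by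
  have hbdd := bddAbove_NC_set G k
  obtain ⟨S, hS, hcomp⟩ := Nat.sSup_mem (by exact ⟨0, ∅, by simp, fun v => v.2.elim⟩) hbdd
  obtain ⟨S, rfl⟩ : ∃ T : Finset V, ↑T = S := ⟨S.toFinset, Set.coe_toFinset S⟩
  exact ⟨S, by rw [NC, hS, Set.ncard_coe_finset],
    fun v hv => SimpleGraph.ncard_supp_induce hv ▸ hcomp ⟨v, hv⟩⟩

theorem NC_mono (G : SimpleGraph V) (h : k ≤ k') : NC G k ≤ NC G k' := by
  obtain ⟨S, hS, hcomp⟩ := exists_card_eq_NC G k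
  exact hS ▸ le_NC fun v hv => (hcomp v hv).trans h

end NC

section Descendants

variable {V : Type*} {W U : Finset V} {par : V → V} {d : V → ℕ} {a w : V}

noncomputable def descendants (W : Finset V) (par : V → V) (w : V) : Finset V :=
  {a ∈ W | Relation.ReflTransGen (fun x y => par x = y ∧ y ∈ W) a w}

theorem mem_descendants_self (hw : w ∈ W) : w ∈ descendants W par w :=
  mem_filter.2 ⟨hw, .refl⟩

theorem descendants_mono (h : U ⊆ W) : descendants U par w ⊆ descendants W par w :=
  fun _ ha => mem_filter.2 ⟨h (mem_filter.1 ha).1,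
    Relation.ReflTransGen.mono (fun _ _ hxy => ⟨hxy.1, h hxy.2⟩) _ _ (mem_filter.1 ha).2⟩

theorem mem_descendants_of_par_mem (ha : a ∈ W) (h : par a ∈ descendants W par w) :
    a ∈ descendants W par w :=
  mem_filter.2 ⟨ha, .head ⟨rfl, (mem_filter.1 h).1⟩ (mem_filter.1 h).2⟩

theorem par_mem_descendants (ha : a ∈ descendants W par w) (hne : a ≠ w) :
    par a ∈ descendants W par w := by
  rcases (mem_filter.1 ha).2.cases_head with rfl | ⟨b, ⟨rfl, hb⟩, hbw⟩
  · exact absurd rfl hne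
  · exact mem_filter.2 ⟨hb, hbw⟩

theorem lt_of_mem_descendants (hpar : ∀ x ∈ W, par x = x ∨ d (par x) < d x)
    (ha : a ∈ descendants W par w) (hne : a ≠ w) : d w < d a := by
  obtain ⟨haW, hchain⟩ := mem_filter.1 ha
  suffices a = w ∨ d w < d a from this.resolve_left hne
  clear ha hne
  induction hchain using Relation.ReflTransGen.head_induction_on with
  | refl => exact .inl rfl
  | @head b c hbc _ ih =>
    obtain ⟨rfl, hcW⟩ := hbc
    rcases hpar b haW with h | h
    · rw [h] at ih
      exact ih haW
    · rcases ih hcW with h' | h'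
      exacts [.inr (h' ▸ h), .inr (h'.trans h)]

theorem card_image_erase_parent_edge [DecidableEq V] {C : Finset V} {r : V} (hr : r ∈ C)
    (hd : ∀ x ∈ C, x ≠ r → d (par x) < d x) :
    #((C.erase r).image fun x => s(x, par x)) = #C - 1 := by
  rw [card_image_of_injOn, card_erase_of_mem hr]
  rintro x hx y hy hxy
  simp only [coe_erase, Set.mem_sdiff, mem_coe, Set.mem_singleton_iff] at hx hy
  rcases Sym2.eq_iff.1 hxy with ⟨h, -⟩ | ⟨h₁, h₂⟩
  · exact h
  · have h₃ := hd x hx.1 hx.2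
    have h₄ := hd y hy.1 hy.2
    rw [h₂] at h₃
    rw [← h₁] at h₄
    omega

end Descendants

namespace SimpleGraph

section Forest

variable {V : Type*} {W U : Finset V} {par : V → V} {d : V → ℕ} {u v w x y : V}
  {G : SimpleGraph V}

/-- `G[W]` is a subgraph of the rooted forest with parent map `par` and depth function `d`: roots
are the fixed points of `par`, and every edge of `G[W]` joins a vertex to its parent. -/
def IsForestParent (G : SimpleGraph V) (W : Finset V) (par : V → V) (d : V → ℕ) : Prop :=
  (∀ x ∈ W, par x = x ∨ d (par x) < d x) ∧
    ∀ x ∈ W, ∀ y ∈ W, G.Adj x y → y = par x ∨ x = par y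

theorem IsForestParent.mono (hW : G.IsForestParent W par d) (h : U ⊆ W) :
    G.IsForestParent U par d :=
  ⟨fun x hx => hW.1 x (h hx), fun x hx y hy => hW.2 x (h hx) y (h hy)⟩

theorem IsForestParent.mem_descendants_of_adj (hW : G.IsForestParent W par d)
    (hx : x ∈ descendants W par w) (hy : y ∈ W) (hxy : G.Adj x y) :
    y ∈ descendants W par w ∨ x = w ∧ y = par w := by
  rcases hW.2 x (mem_filter.1 hx).1 y hy hxy with rfl | rfl
  · by_cases hxw : x = w
    · exact .inr ⟨hxw, hxw ▸ rfl⟩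
    · exact .inl (par_mem_descendants hx hxw)
  · exact .inl (mem_descendants_of_par_mem hy hx)

theorem IsForestParent.mem_descendants_of_restrict_adj (hW : G.IsForestParent W par d)
    (hUW : U ⊆ W) (hvU : v ∉ U) (hx : x ∈ descendants W par v) (hxy : (G.restrict U).Adj x y) :
    y ∈ descendants W par v := by
  rcases hW.mem_descendants_of_adj hx (hUW hxy.2.2) hxy.1 with h | ⟨rfl, -⟩
  exacts [h, absurd hxy.2.1 hvU]

variable [Fintype V]

theorem IsForestParent.exists_componentIn_subset_descendants (hU : G.IsForestParent U par d)
    (hu : u ∈ U) : ∃ m ∈ G.componentIn U u, G.componentIn U u ⊆ descendants U par m := by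
  obtain ⟨m, hm, hmin⟩ := exists_min_image (G.componentIn U u) d ⟨u, self_mem_componentIn⟩
  refine ⟨m, hm, fun a ha => ?_⟩
  rw [← componentIn_eq_of_mem hm] at ha
  refine (componentIn_subset_of_forall_adj (X := {x | x ∈ descendants U par m ∧
    x ∈ G.componentIn U u}) ?_ ⟨mem_descendants_self (componentIn_subset hu hm), hm⟩ ha).1
  rintro x ⟨hxD, hxC⟩ y ⟨hxy, hxU, hyU⟩
  have hyC : y ∈ G.componentIn U u :=
    mem_componentIn.2 ((mem_componentIn.1 hxC).trans (restrict_adj.2 ⟨hxy, hxU, hyU⟩).reachable)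
  refine ⟨?_, hyC⟩
  rcases hU.mem_descendants_of_adj hxD hyU hxy with h | ⟨rfl, rfl⟩
  · exact h
  · rcases hU.1 x hxU with h | h
    · rw [h] at hxy
      exact (G.irrefl hxy).elim
    · exact absurd (hmin _ hyC) (not_le.2 h)

theorem IsForestParent.card_componentIn_le (hU : G.IsForestParent U par d) (hUW : U ⊆ W)
    (hu : u ∈ U) {K : ℕ} (h : ∀ m ∈ G.componentIn U u, #(descendants W par m) ≤ K) :
    #(G.componentIn U u) ≤ K := by
  obtain ⟨m, hm, hsub⟩ := hU.exists_componentIn_subset_descendants hu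
  exact (card_le_card (hsub.trans (descendants_mono hUW))).trans (h m hm)

theorem IsForestParent.exists_cut [DecidableEq V] (K : ℕ) (hW : G.IsForestParent W par d) :
    ∃ R ⊆ W, (K + 1) * #R ≤ #W ∧ ∀ u ∈ W \ R, #(G.componentIn (W \ R) u) ≤ K := by
  induction W using Finset.strongInduction with
  | H W ih =>
  by_cases hheavy : ∃ v ∈ W, K < #(descendants W par v)
  swap
  · simp only [not_exists, not_and, not_lt] at hheavy
    refine ⟨∅, empty_subset _, by simp, fun u hu => ?_⟩
    rw [sdiff_empty] at hu ⊢
    exact hW.card_componentIn_le subset_rfl hu fun m hm => hheavy m (componentIn_subset hu hm)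
  -- Remove the deepest vertex `v` with more than `K` descendants and recurse on the vertices
  -- that are not descendants of `v`.
  obtain ⟨v, hv, hvmax⟩ := exists_max_image {v ∈ W | K < #(descendants W par v)} d
    (by simpa [Finset.Nonempty] using hheavy)
  obtain ⟨hvW, hvK⟩ := mem_filter.1 hv
  set D := descendants W par v
  have hDW : D ⊆ W := filter_subset _ _
  obtain ⟨R, hRW, hRcard, hR⟩ :=
    ih (W \ D) (sdiff_ssubset hDW ⟨v, mem_descendants_self hvW⟩) (hW.mono sdiff_subset)
  refine ⟨insert v R, insert_subset hvW (hRW.trans sdiff_subset), ?_, fun u hu => ?_⟩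
  · calc (K + 1) * #(insert v R) ≤ (K + 1) * (#R + 1) := by gcongr; exact card_insert_le _ _
      _ ≤ #(W \ D) + #D := by rw [mul_add_one]; omega
      _ = #W := card_sdiff_add_card_eq_card hDW
  have hU : W \ insert v R ⊆ W := sdiff_subset
  have hvU : v ∉ W \ insert v R := fun h => (mem_sdiff.1 h).2 (mem_insert_self _ _)
  have hclosed := fun x (hx : x ∈ D) y => hW.mem_descendants_of_restrict_adj (y := y) hU hvU hx
  by_cases huD : u ∈ D
  · refine (hW.mono hU).card_componentIn_le hU hu fun m hm => not_lt.1 fun hmK => ?_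
    have hmD : m ∈ D := componentIn_subset_of_forall_adj hclosed huD hm
    have hvm : d v < d m :=
      lt_of_mem_descendants hW.1 hmD fun h => hvU (h ▸ componentIn_subset hu hm)
    exact (hvmax m (mem_filter.2 ⟨hDW hmD, hmK⟩)).not_gt hvm
  · have hsub : G.componentIn (W \ insert v R) u ⊆ (W \ D) \ R := fun a ha => by
      have haD : a ∉ D := componentIn_subset_of_forall_adj (X := {x | x ∉ D})
        (fun x hx y hxy hy => hx (hclosed y hy x hxy.symm)) huD ha
      have haU := mem_sdiff.1 (componentIn_subset hu ha)
      exact mem_sdiff.2 ⟨mem_sdiff.2 ⟨haU.1, haD⟩, fun h => haU.2 (mem_insert_of_mem h)⟩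
    exact (card_le_card (componentIn_subset_componentIn hsub)).trans
      (hR u (hsub self_mem_componentIn))

end Forest

section Sparse

variable {V : Type*} [Fintype V] [DecidableEq V] {G : SimpleGraph V}

def IsLocallySparse (G : SimpleGraph V) [DecidableRel G.Adj] (K D : ℕ) : Prop :=
  ∀ A : Finset V, K < #A → #A ≤ D → #(G.edgeFinset ∩ A.sym2) ≤ #A + #A / K

theorem exists_parent_of_subset_componentIn {C : Finset V} {r : V} (hC : C ⊆ G.componentIn C r) :
    ∃ par : V → V, ∃ d : V → ℕ, par r = r ∧
      ∀ x ∈ C, x ≠ r → G.Adj x (par x) ∧ par x ∈ C ∧ d (par x) < d x := by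
  have key : ∀ x ∈ C, x ≠ r →
      ∃ y, (G.restrict C).Adj x y ∧ (G.restrict C).dist y r < (G.restrict C).dist x r := by
    intro x hx hxr
    obtain ⟨p, hp⟩ := (mem_componentIn.1 (hC hx)).symm.exists_walk_length_eq_dist
    cases p with
    | nil => exact absurd rfl hxr
    | cons hxy q =>
      refine ⟨_, hxy, (dist_le q).trans_lt ?_⟩
      rw [← hp, Walk.length_cons]
      omega
  choose! par hpar using key
  refine ⟨Function.update par r r, fun x => (G.restrict C).dist x r, by simp, fun x hx hxr => ?_⟩
  obtain ⟨⟨hadj, -, hpx⟩, hlt⟩ := hpar x hx hxr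
  rw [Function.update_of_ne hxr]
  exact ⟨hadj, hpx, hlt⟩

theorem exists_isForestParent_sdiff [DecidableRel G.Adj] {C : Finset V} {r : V} {par : V → V}
    {d : V → ℕ} (hr : r ∈ C) (hpr : par r = r)
    (hpar : ∀ x ∈ C, x ≠ r → G.Adj x (par x) ∧ par x ∈ C ∧ d (par x) < d x) :
    ∃ R ⊆ C, #R + #C ≤ #(G.edgeFinset ∩ C.sym2) + 1 ∧ G.IsForestParent (C \ R) par d := by
  set E := G.edgeFinset ∩ C.sym2
  set T := (C.erase r).image fun x => s(x, par x)
  have hTE : T ⊆ E := by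
    simp only [T, E, image_subset_iff, mem_erase]
    exact fun x ⟨hxr, hx⟩ => mem_inter.2 ⟨mem_edgeFinset.2 (hpar x hx hxr).1,
      mk_mem_sym2_iff.2 ⟨hx, (hpar x hx hxr).2.1⟩⟩
  -- `R` consists of one endpoint of every edge of `G[C]` outside the tree `T`.
  refine ⟨(E \ T).image fun e => e.out.1, fun x hx => ?_, ?_, ?_, fun x hx y hy hxy => ?_⟩
  · obtain ⟨e, he, rfl⟩ := mem_image.1 hx
    exact mem_sym2_iff.1 (mem_inter.1 (Finset.mem_sdiff.1 he).1).2 _ (Sym2.out_fst_mem e)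
  · have h := card_image_le (s := E \ T) (f := fun e => e.out.1)
    have hT : #T = #C - 1 := card_image_erase_parent_edge hr fun x hx hxr => (hpar x hx hxr).2.2
    rw [card_sdiff_of_subset hTE] at h
    have := card_le_card hTE
    have := card_pos.2 ⟨r, hr⟩
    omega
  · intro x hx
    by_cases hxr : x = r
    · exact .inl (hxr ▸ hpr)
    · exact .inr (hpar x (mem_sdiff.1 hx).1 hxr).2.2
  have hxyT : s(x, y) ∈ T := by
    by_contra hT
    have hN : s(x, y) ∈ E \ T := mem_sdiff.2 ⟨mem_inter.2 ⟨mem_edgeFinset.2 hxy,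
      mk_mem_sym2_iff.2 ⟨(mem_sdiff.1 hx).1, (mem_sdiff.1 hy).1⟩⟩, hT⟩
    rcases Sym2.mem_iff.1 (Sym2.out_fst_mem s(x, y)) with h | h
    · exact (mem_sdiff.1 hx).2 (h ▸ mem_image_of_mem _ hN)
    · exact (mem_sdiff.1 hy).2 (h ▸ mem_image_of_mem _ hN)
  obtain ⟨z, -, hz⟩ := mem_image.1 hxyT
  rcases Sym2.eq_iff.1 hz with ⟨rfl, rfl⟩ | ⟨rfl, rfl⟩
  exacts [.inl rfl, .inr rfl]

theorem exists_cut_of_subset_componentIn [DecidableRel G.Adj] {K : ℕ} {C : Finset V} {r : V}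
    (hr : r ∈ C) (hC : C ⊆ G.componentIn C r) (hKC : K < #C)
    (hsparse : #(G.edgeFinset ∩ C.sym2) ≤ #C + #C / K) :
    ∃ R ⊆ C, K * #R ≤ 3 * #C ∧ ∀ u ∈ C \ R, #(G.componentIn (C \ R) u) ≤ K := by
  obtain ⟨par, d, hpr, hpar⟩ := exists_parent_of_subset_componentIn hC
  obtain ⟨R₁, hR₁C, hR₁, hforest⟩ := exists_isForestParent_sdiff hr hpr hpar
  obtain ⟨R₂, hR₂, hR₂card, hR₂comp⟩ := hforest.exists_cut K
  refine ⟨R₁ ∪ R₂, union_subset hR₁C (hR₂.trans sdiff_subset), ?_, ?_⟩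
  · have h₁ : K * (#C / K) ≤ #C := Nat.mul_div_le _ _
    have h₂ : (K + 1) * #R₂ ≤ #C := hR₂card.trans (card_le_card sdiff_subset)
    calc K * #(R₁ ∪ R₂) ≤ K * (#C / K + 1) + K * #R₂ := by
          rw [← mul_add]; gcongr; exact (card_union_le _ _).trans (by omega)
      _ ≤ 3 * #C := by rw [mul_add_one]; nlinarith
  · rwa [sdiff_union_distrib, ← Finset.sdiff_sdiff_left']

theorem exists_cut_of_isLocallySparse [DecidableRel G.Adj] {K D : ℕ}
    (hG : G.IsLocallySparse K D) (S : Finset V) (hS : ∀ v ∈ S, #(G.componentIn S v) ≤ D) :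
    ∃ R ⊆ S, K * #R ≤ 3 * #S ∧ ∀ u ∈ S \ R, #(G.componentIn (S \ R) u) ≤ K := by
  induction S using Finset.strongInduction with
  | H S ih =>
  by_cases hbig : ∃ v ∈ S, K < #(G.componentIn S v)
  swap
  · simp only [not_exists, not_and, not_lt] at hbig
    exact ⟨∅, empty_subset _, by simp, by simpa using hbig⟩
  obtain ⟨v, hv, hKv⟩ := hbig
  set C := G.componentIn S v
  have hCS : C ⊆ S := componentIn_subset hv
  obtain ⟨RC, hRC, hRCcard, hRCcomp⟩ := exists_cut_of_subset_componentIn self_mem_componentIn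
    (componentIn_subset_componentIn subset_rfl) hKv (hG C hKv (hS v hv))
  obtain ⟨R, hR, hRcard, hRcomp⟩ := ih (S \ C) (sdiff_ssubset hCS ⟨v, self_mem_componentIn⟩)
    fun u hu => (card_le_card (componentIn_mono sdiff_subset)).trans (hS u (mem_sdiff.1 hu).1)
  refine ⟨RC ∪ R, union_subset (hRC.trans hCS) (hR.trans sdiff_subset), ?_, fun u hu => ?_⟩
  · calc K * #(RC ∪ R) ≤ K * #RC + K * #R := by rw [← mul_add]; gcongr; exact card_union_le _ _
      _ ≤ 3 * #C + 3 * #(S \ C) := add_le_add hRCcard hRcard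
      _ = 3 * #S := by rw [← mul_add, add_comm, card_sdiff_add_card_eq_card hCS]
  have hsubS : G.componentIn (S \ (RC ∪ R)) u ⊆ G.componentIn S u := componentIn_mono sdiff_subset
  have hmem : ∀ a ∈ G.componentIn (S \ (RC ∪ R)) u, a ∈ S ∧ a ∉ RC ∧ a ∉ R := fun a ha => by
    simpa [not_or] using componentIn_subset hu ha
  by_cases huC : u ∈ C
  · have hsub : G.componentIn (S \ (RC ∪ R)) u ⊆ C \ RC := fun a ha => by
      refine Finset.mem_sdiff.2 ⟨?_, (hmem a ha).2.1⟩
      rw [show C = G.componentIn S v from rfl, ← componentIn_eq_of_mem huC]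
      exact hsubS ha
    exact (card_le_card (componentIn_subset_componentIn hsub)).trans
      (hRCcomp u (hsub self_mem_componentIn))
  · have hsub : G.componentIn (S \ (RC ∪ R)) u ⊆ (S \ C) \ R := fun a ha => by
      refine Finset.mem_sdiff.2 ⟨Finset.mem_sdiff.2 ⟨(hmem a ha).1, fun haC => huC ?_⟩,
        (hmem a ha).2.2⟩
      rw [show C = G.componentIn S v from rfl, ← componentIn_eq_of_mem haC,
        componentIn_eq_of_mem (hsubS ha)]
      exact self_mem_componentIn
    exact (card_le_card (componentIn_subset_componentIn hsub)).trans
      (hRcomp u (hsub self_mem_componentIn))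

theorem mul_NC_le_of_isLocallySparse [DecidableRel G.Adj] {K D : ℕ}
    (hG : G.IsLocallySparse K D) : K * NC G D ≤ K * NC G K + 3 * Fintype.card V := by
  obtain ⟨S, hSeq, hS⟩ := exists_card_eq_NC G D
  obtain ⟨R, hRS, hRcard, hR⟩ := exists_cut_of_isLocallySparse hG S hS
  have h₁ : #S ≤ NC G K + #R := by
    have := le_NC hR
    rw [card_sdiff_of_subset hRS] at this
    omega
  have h₂ : #S ≤ Fintype.card V := card_le_univ S
  calc K * NC G D ≤ K * NC G K + K * #R := by rw [← hSeq, ← mul_add]; gcongr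
    _ ≤ K * NC G K + 3 * Fintype.card V := by omega

end Sparse

end SimpleGraph

theorem erProb_not_isLocallySparse_le {n K D : ℕ} {p : ℝ} (hp₀ : 0 ≤ p) (hp₁ : p ≤ 1) :
    erProb n p {G | ¬ G.IsLocallySparse K D} ≤ ∑ s ∈ Icc (K + 1) D,
      n.choose s * (s ^ 2).choose (s + s / K + 1) * p ^ (s + s / K + 1) := by
  calc erProb n p {G | ¬ G.IsLocallySparse K D}
      ≤ erProb n p (⋃ s ∈ Icc (K + 1) D, ⋃ A ∈ powersetCard s (univ : Finset (Fin n)),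
          {G | s + s / K + 1 ≤ #(G.edgeFinset ∩ A.sym2)}) := by
        refine erProb_mono hp₀ hp₁ fun G hG => ?_
        simp only [Set.mem_ofPred_eq, SimpleGraph.IsLocallySparse, not_forall, not_le] at hG
        obtain ⟨A, hKA, hAD, hA⟩ := hG
        exact Set.mem_iUnion₂.2 ⟨#A, mem_Icc.2 ⟨hKA, hAD⟩,
          Set.mem_iUnion₂.2 ⟨A, mem_powersetCard.2 ⟨subset_univ A, rfl⟩, hA⟩⟩
    _ ≤ ∑ s ∈ Icc (K + 1) D, ∑ A ∈ powersetCard s (univ : Finset (Fin n)),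
          ((s ^ 2).choose (s + s / K + 1) : ℝ) * p ^ (s + s / K + 1) := by
        refine (erProb_biUnion_le hp₀ hp₁ _ _).trans (sum_le_sum fun s _ =>
          (erProb_biUnion_le hp₀ hp₁ _ _).trans (sum_le_sum fun A hA =>
            (erProb_card_inter_ge_le hp₀ hp₁ _ _).trans ?_))
        have hsym : #A.sym2 ≤ s ^ 2 := by
          rw [card_sym2, Nat.choose_two_right, Nat.add_sub_cancel, (mem_powersetCard.1 hA).2]
          exact Nat.div_le_of_le_mul (by nlinarith)
        gcongr
    _ = _ := by simp [sum_const, card_powersetCard, mul_assoc]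

theorem tendsto_erProb_of_compl_le {A : ∀ n, Set (SimpleGraph (Fin n))} {p b : ℕ → ℝ}
    (hb : Tendsto b atTop (nhds 0))
    (h : ∀ᶠ n in atTop, 0 ≤ p n ∧ p n ≤ 1 ∧ erProb n (p n) (A n)ᶜ ≤ b n) :
    Tendsto (fun n => erProb n (p n) (A n)) atTop (nhds 1) := by
  refine tendsto_of_tendsto_of_tendsto_of_le_of_le' (by simpa using hb.const_sub 1)
    tendsto_const_nhds ?_ ?_
  · filter_upwards [h] with n hn
    rw [← compl_compl (A n), erProb_compl]
    linarith [hn.2.2]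
  · filter_upwards [h] with n hn
    exact erProb_le_one hn.1 hn.2.1 _

theorem NC_div_le_of_isLocallySparse {n K D k : ℕ} {ε : ℝ} {G : SimpleGraph (Fin n)}
    [DecidableRel G.Adj] (hK : 0 < K) (hKk : K ≤ k) (hε : 3 ≤ ε * K)
    (hG : G.IsLocallySparse K D) : (NC G D : ℝ) / n ≤ NC G k / n + ε := by
  rcases n.eq_zero_or_pos with rfl | hn
  · simp only [CharP.cast_eq_zero, div_zero, zero_add]
    nlinarith [(Nat.cast_pos.2 hK : (0 : ℝ) < K)]
  have h := SimpleGraph.mul_NC_le_of_isLocallySparse hG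
  rw [Fintype.card_fin] at h
  have h' : (K : ℝ) * NC G D ≤ K * NC G k + 3 * n := by
    exact_mod_cast h.trans (by gcongr; exact NC_mono G hKk)
  rw [div_add' _ _ _ (by positivity), div_le_div_iff_of_pos_right (by positivity)]
  nlinarith [(Nat.cast_pos.2 hK : (0 : ℝ) < K), (Nat.cast_pos.2 hn : (0 : ℝ) < n)]

theorem exists_pos_le_floor_one_div_and_mul_le (K : ℕ) {a : ℝ} (ha : 0 < a) :
    ∃ δ > (0 : ℝ), K ≤ ⌊1 / δ⌋₊ ∧ a * δ ≤ 1 / 2 := by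
  set δ : ℝ := min (1 / (K + 1)) (1 / (2 * a))
  have hδ : 0 < δ := by positivity
  refine ⟨δ, hδ, Nat.le_floor ?_, ?_⟩
  · calc (K : ℝ) ≤ 1 / (1 / (K + 1)) := by rw [one_div_one_div]; linarith
      _ ≤ 1 / δ := one_div_le_one_div_of_le hδ (min_le_left _ _)
  · calc a * δ ≤ a * (1 / (2 * a)) := by gcongr; exact min_le_right _ _
      _ = 1 / 2 := by field_simp

/-- For every `c > 1` and `ε > 0` there exists `δ > 0` such that whp the
random graph `G ∈ 𝒢(n, c/n)` satisfies `ν(G, 𝒞_{⌊δn⌋}) ≤ ν(G, 𝒞_{⌊1/δ⌋}) + ε`,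
where `ν(G, 𝒞_k) = N(G, 𝒞_k)/n`. -/
theorem er_dismantle (c ε : ℝ) (hc : 1 < c) (hε : 0 < ε) :
    ∃ δ > (0 : ℝ), Tendsto (fun n : ℕ =>
      erProb n (c / n) {G | (NC G ⌊δ * n⌋₊ : ℝ) / n ≤ (NC G ⌊1 / δ⌋₊ : ℝ) / n + ε})
      atTop (nhds 1) := by
  obtain ⟨K, hK⟩ := exists_nat_gt (3 / ε)
  have hK₀ : 0 < K := by exact_mod_cast (by positivity : (0 : ℝ) < 3 / ε).trans hK
  have hKε : 3 ≤ ε * K := by rw [div_lt_iff₀ hε] at hK; linarith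
  have hc₀ : 0 < c := zero_lt_one.trans hc
  obtain ⟨δ, hδ, hKδ, hδc⟩ :=
    exists_pos_le_floor_one_div_and_mul_le K (by positivity : 0 < (exp 2 * c) ^ K * (exp 1 * c))
  refine ⟨δ, hδ, tendsto_erProb_of_compl_le
    (tendsto_sum_choose_mul_choose_sq_mul_pow hc.le hK₀ hδc) ?_⟩
  filter_upwards [eventually_ge_atTop ⌈c⌉₊] with n hn
  have hp₀ : 0 ≤ c / n := by positivity
  have hp₁ : c / n ≤ 1 :=
    div_le_one_of_le₀ ((Nat.le_ceil c).trans (by exact_mod_cast hn)) n.cast_nonneg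
  refine ⟨hp₀, hp₁, (erProb_mono hp₀ hp₁ ?_).trans (erProb_not_isLocallySparse_le hp₀ hp₁)⟩
  exact fun G hG hsparse => hG (NC_div_le_of_isLocallySparse hK₀ hKδ hKε hsparse)
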